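/- (Theorem 4(ii)) Let n ≥ 3, let j₁,…,j_n be a permutation of 1,…,n, and let ρ be a pure density matrix on (ℂ^d)^{⊗n} that is separable under at least one bipartition of {1,…,n} into two nonempty complementary subsets, but entangled (not separable) under the bipartition j₁…j_{n−1} | j_n. Then for every k = 1,…,d²−1: if n is odd, ‖T_{j₁…j_{n−1}|j_n}‖_k ≤ √(2ⁿ k (d^{⌊n/2⌋}−1)(d^{n−⌊n/2⌋}−1)/dⁿ); if n is even, ‖T_{j₁…j_{n−1}|j_n}‖_k ≤ √(2ⁿ k (d^{n/2}−1)²/dⁿ). -/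

import Mathlib

open Matrix ComplexOrder

/-- The singular values of a real matrix `M`: square roots of eigenvalues of `Mᴴ * M`. -/
noncomputable def singVals {α β : Type*} [Fintype α] [Fintype β] [DecidableEq β]
    (M : Matrix α β ℝ) : β → ℝ :=
  fun i => Real.sqrt ((Matrix.isHermitian_conjTranspose_mul_self M).eigenvalues i)

/-- The Ky Fan `k`-norm of a real matrix: the sum of its `k` largest singular values
(realized as the largest sum of singular values over index sets of size at most `k`). -/
noncomputable def kyFan {α β : Type*} [Fintype α] [Fintype β] [DecidableEq β]
    (k : ℕ) (M : Matrix α β ℝ) : ℝ :=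
  (Finset.univ.powerset.filter (fun s : Finset β => s.card ≤ k)).sup'
    ⟨∅, by simp⟩ (fun s => ∑ i ∈ s, singVals M i)

/-- Separability of an `n`-partite state (indexed by `Fin n → Fin d`) under the
bipartition `A | Aᶜ`: `ρ` is, up to the permutation of tensor factors, the tensor
product of a density matrix on the factors in `A` and one on the factors not in `A`. -/
def SepUnder {n d : ℕ} (ρ : Matrix (Fin n → Fin d) (Fin n → Fin d) ℂ)
    (A : Finset (Fin n)) : Prop :=
  ∃ (ρA : Matrix ({j // j ∈ A} → Fin d) ({j // j ∈ A} → Fin d) ℂ)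
    (ρB : Matrix ({j // j ∉ A} → Fin d) ({j // j ∉ A} → Fin d) ℂ),
    ρA.PosSemidef ∧ ρA.trace = 1 ∧ ρB.PosSemidef ∧ ρB.trace = 1 ∧
    ∀ v w, ρ v w = ρA (fun j => v j.1) (fun j => w j.1) * ρB (fun j => v j.1) (fun j => w j.1)

/-- The full `n`-body correlation tensor entry `t_{a 0, …, a (n-1)}` of `ρ`,
i.e. `tr (ρ · (λ_{a 0} ⊗ ⋯ ⊗ λ_{a (n-1)}))`. -/
noncomputable def corrFull {n d : ℕ} (lam : Fin (d ^ 2 - 1) → Matrix (Fin d) (Fin d) ℂ)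
    (ρ : Matrix (Fin n → Fin d) (Fin n → Fin d) ℂ) (a : Fin n → Fin (d ^ 2 - 1)) : ℝ :=
  (Matrix.trace (ρ * Matrix.of (fun v w : Fin n → Fin d => ∏ j, lam (a j) (v j) (w j)))).re

/-
If `ρ` is a product across some cut `A | Aᶜ`, the squared Hilbert–Schmidt norm of its full
correlation tensor is the product of those of the two factors. For a state on `h` sites,
Bessel's inequality for the orthogonal family `{1} ∪ {λ_{a_1} ⊗ ⋯ ⊗ λ_{a_h}}` together with
`tr ρ² ≤ 1` bounds that norm by `2^h (d^h - 1) / d^h`, and `(d^h - 1) (d^(n-h) - 1)` is largest at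
the balanced cut `h = ⌊n/2⌋`. Finally, the Ky Fan `k`-norm of a matrix is at most `√k` times its
Frobenius norm, and the Frobenius norm of `T_{j₁…j_{n-1}|j_n}` is that of the correlation tensor.
-/

open scoped Kronecker

namespace Matrix

section PiKron

variable {J κ R : Type*} [Fintype J] [CommSemiring R]

def piKron (f : J → Matrix κ κ R) : Matrix (J → κ) (J → κ) R :=
  of fun v w => ∏ j, f j (v j) (w j)

lemma isHermitian_piKron [StarRing R] {f : J → Matrix κ κ R} (hf : ∀ j, (f j).IsHermitian) :
    (piKron f).IsHermitian := by
  ext v w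
  simp only [piKron, conjTranspose_apply, of_apply, star_prod]
  exact Finset.prod_congr rfl fun j _ => congrFun₂ (hf j) (v j) (w j)

lemma piKron_eq_kronecker_submatrix (p : J → Prop) [DecidablePred p] [Fintype {j // p j}]
    [Fintype {j // ¬p j}] (f : J → Matrix κ κ R) :
    piKron f = (piKron (fun j : {j // p j} => f j) ⊗ₖ piKron (fun j : {j // ¬p j} => f j)).submatrix
      (Equiv.piEquivPiSubtypeProd p _) (Equiv.piEquivPiSubtypeProd p _) := by
  ext v w
  simp only [piKron, submatrix_apply, kroneckerMap_apply, of_apply]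
  convert (Fintype.prod_subtype_mul_prod_subtype p _).symm using 3 <;>
    first | rfl | exact congrArg _ (Subsingleton.elim _ _)

variable [Fintype κ] [DecidableEq J]

lemma trace_piKron (f : J → Matrix κ κ R) : (piKron f).trace = ∏ j, (f j).trace := by
  simp only [trace, diag, piKron, of_apply]
  exact (Fintype.prod_sum fun j x => f j x x).symm

lemma piKron_mul_piKron (f g : J → Matrix κ κ R) :
    piKron f * piKron g = piKron (fun j => f j * g j) := by
  ext v w
  simp only [piKron, mul_apply, of_apply, ← Finset.prod_mul_distrib]
  exact (Fintype.prod_sum fun j x => f j (v j) x * g j x (w j)).symm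

lemma trace_piKron_mul_piKron_of_orthogonal {ι : Type*} [DecidableEq ι] {lam : ι → Matrix κ κ R}
    {c : R} (horth : ∀ i i', (lam i * lam i').trace = if i = i' then c else 0) (a b : J → ι) :
    (piKron (fun j => lam (a j)) * piKron (fun j => lam (b j))).trace =
      if a = b then c ^ Fintype.card J else 0 := by
  rw [piKron_mul_piKron, trace_piKron]
  simp only [horth]
  split_ifs with hab
  · simp [hab]
  · obtain ⟨j, hj⟩ := Function.ne_iff.1 hab
    exact Finset.prod_eq_zero (Finset.mem_univ j) (if_neg hj)

end PiKron

lemma trace_submatrix_equiv {m n R : Type*} [Fintype m] [Fintype n] [AddCommMonoid R]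
    (M : Matrix n n R) (e : m ≃ n) : (M.submatrix e e).trace = M.trace := by
  simp only [trace, diag, submatrix_apply]
  exact e.sum_comp fun i => M i i

section HilbertSchmidt

variable {ι m n : Type*} [Fintype m] [Fintype n]

lemma inner_toLp_vec (A B : Matrix m n ℂ) :
    inner ℂ (WithLp.toLp 2 (vec A)) (WithLp.toLp 2 (vec B)) = (Aᴴ * B).trace := by
  rw [EuclideanSpace.inner_toLp_toLp, dotProduct_comm, star_vec_dotProduct_vec]

-- Bessel's inequality for the Hilbert–Schmidt inner product `⟪A, B⟫ = tr (Aᴴ * B)`.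
lemma sum_norm_trace_conjTranspose_mul_sq_div_le [Fintype ι] [DecidableEq ι]
    (G : ι → Matrix m n ℂ) (c : ι → ℝ) (hc : ∀ i, 0 < c i)
    (hG : ∀ i j, ((G i)ᴴ * G j).trace = if i = j then (c i : ℂ) else 0)
    (ρ : Matrix m n ℂ) :
    ∑ i, ‖((G i)ᴴ * ρ).trace‖ ^ 2 / c i ≤ ((ρᴴ * ρ).trace).re := by
  set e : ι → EuclideanSpace ℂ (n × m) :=
    fun i => WithLp.toLp 2 (vec (((Real.sqrt (c i))⁻¹ : ℂ) • G i))
  have he : Orthonormal ℂ e := by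
    rw [orthonormal_iff_ite]
    intro i j
    simp only [e, inner_toLp_vec, conjTranspose_smul, smul_mul, Matrix.mul_smul, trace_smul, hG,
      smul_eq_mul, star_inv₀, Complex.star_def, Complex.conj_ofReal]
    split_ifs with hij
    · subst hij
      have hsq : (Real.sqrt (c i) : ℂ) ^ 2 = c i := by exact_mod_cast Real.sq_sqrt (hc i).le
      have hne : (Real.sqrt (c i) : ℂ) ≠ 0 := by exact_mod_cast (Real.sqrt_pos.2 (hc i)).ne'
      field_simp
      exact hsq.symm
    · simp
  have hbessel := he.sum_inner_products_le (s := Finset.univ) (WithLp.toLp 2 (vec ρ))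
  rw [@norm_sq_eq_re_inner ℂ, inner_toLp_vec] at hbessel
  refine le_of_eq_of_le (Finset.sum_congr rfl fun i _ => ?_) hbessel
  rw [inner_toLp_vec, conjTranspose_smul, smul_mul, trace_smul, smul_eq_mul, norm_mul, mul_pow,
    norm_star, norm_inv, Complex.norm_real, Real.norm_of_nonneg (Real.sqrt_nonneg _), inv_pow,
    Real.sq_sqrt (hc i).le, div_eq_inv_mul]

end HilbertSchmidt

section Purity

variable {n : Type*} [Fintype n] [DecidableEq n]

lemma trace_conjStarAlgAut {R : Type*} [CommSemiring R] [StarRing R] (u : unitary (Matrix n n R))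
    (X : Matrix n n R) : (Unitary.conjStarAlgAut R _ u X).trace = X.trace := by
  rw [Unitary.conjStarAlgAut_apply, trace_mul_cycle, Unitary.coe_star_mul_self, Matrix.one_mul]

lemma PosSemidef.re_trace_mul_self_le {A : Matrix n n ℂ} (hA : A.PosSemidef) :
    ((A * A).trace).re ≤ A.trace.re ^ 2 := by
  have hsq : (A * A).trace = ∑ i, ((hA.1.eigenvalues i : ℂ)) ^ 2 := by
    conv_lhs => rw [hA.1.spectral_theorem, ← map_mul, trace_conjStarAlgAut, diagonal_mul_diagonal,
      trace_diagonal]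
    simp [sq]
  rw [hsq, hA.1.trace_eq_sum_eigenvalues]
  simp only [Complex.re_sum, ← Complex.ofReal_pow, Complex.ofReal_re]
  exact Finset.sum_sq_le_sq_sum_of_nonneg fun i _ => hA.eigenvalues_nonneg i

end Purity

end Matrix

open Matrix

section Correlations

variable {J κ ι : Type*} [Fintype J] [DecidableEq J] [Fintype κ] [Fintype ι]

noncomputable def corrLengthSq (lam : ι → Matrix κ κ ℂ) (ρ : Matrix (J → κ) (J → κ) ℂ) : ℝ :=
  ∑ a : J → ι, ‖(ρ * piKron (fun j => lam (a j))).trace‖ ^ 2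

lemma norm_trace_sq_div_add_corrLengthSq_div_le [Nonempty J] [Nonempty κ] [DecidableEq κ]
    [DecidableEq ι] {lam : ι → Matrix κ κ ℂ} (hherm : ∀ i, (lam i).IsHermitian)
    (htr : ∀ i, (lam i).trace = 0)
    (horth : ∀ i i', (lam i * lam i').trace = if i = i' then 2 else 0)
    (ρ : Matrix (J → κ) (J → κ) ℂ) :
    ‖ρ.trace‖ ^ 2 / (Fintype.card κ : ℝ) ^ Fintype.card J +
        corrLengthSq lam ρ / 2 ^ Fintype.card J ≤ ((ρᴴ * ρ).trace).re := by
  let G : Option (J → ι) → Matrix (J → κ) (J → κ) ℂ :=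
    fun o => o.elim 1 fun a => piKron fun j => lam (a j)
  let c : Option (J → ι) → ℝ :=
    fun o => o.elim ((Fintype.card κ : ℝ) ^ Fintype.card J) fun _ => 2 ^ Fintype.card J
  have hherm' (a : J → ι) := isHermitian_piKron fun j => hherm (a j)
  have htrG (a : J → ι) : (piKron fun j => lam (a j)).trace = 0 := by
    rw [trace_piKron]
    exact Finset.prod_eq_zero (Finset.mem_univ (Classical.arbitrary J)) (htr _)
  have hG : ∀ o o', ((G o)ᴴ * G o').trace = if o = o' then (c o : ℂ) else 0 := by
    rintro (_ | a) (_ | b)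
    · simp [G, c]
    · simp [G, htrG]
    · simp [G, (hherm' a).eq, htrG]
    · simp [G, c, (hherm' a).eq, trace_piKron_mul_piKron_of_orthogonal horth]
  have hbessel := sum_norm_trace_conjTranspose_mul_sq_div_le G c
    (by rintro (_ | _); exacts [pow_pos (Nat.cast_pos.2 Fintype.card_pos) _, pow_pos two_pos _])
    hG ρ
  rw [Fintype.sum_option] at hbessel
  convert hbessel using 2
  · simp [G, c]
  · rw [corrLengthSq, Finset.sum_div]
    refine Finset.sum_congr rfl fun a _ => ?_
    simp [G, c, (hherm' a).eq, trace_mul_comm ρ]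

lemma corrLengthSq_le [Nonempty J] [DecidableEq κ] [DecidableEq ι] {lam : ι → Matrix κ κ ℂ}
    (hherm : ∀ i, (lam i).IsHermitian) (htr : ∀ i, (lam i).trace = 0)
    (horth : ∀ i i', (lam i * lam i').trace = if i = i' then 2 else 0)
    {ρ : Matrix (J → κ) (J → κ) ℂ} (hρ : ρ.PosSemidef) (htrρ : ρ.trace = 1) :
    corrLengthSq lam ρ ≤
      2 ^ Fintype.card J * ((Fintype.card κ : ℝ) ^ Fintype.card J - 1) /
        (Fintype.card κ : ℝ) ^ Fintype.card J := by
  have : Nonempty κ := by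
    by_contra hκ
    rw [not_nonempty_iff] at hκ
    simp [trace] at htrρ
  have hbessel := norm_trace_sq_div_add_corrLengthSq_div_le hherm htr horth ρ
  have hpure : ((ρᴴ * ρ).trace).re ≤ 1 := by
    simpa [hρ.1.eq, htrρ] using hρ.re_trace_mul_self_le
  rw [htrρ, norm_one, one_pow] at hbessel
  have hD : (Fintype.card κ : ℝ) ^ Fintype.card J ≠ 0 := by positivity
  calc corrLengthSq lam ρ = 2 ^ Fintype.card J * (corrLengthSq lam ρ / 2 ^ Fintype.card J) := by
        field_simp
    _ ≤ 2 ^ Fintype.card J * (1 - 1 / (Fintype.card κ : ℝ) ^ Fintype.card J) := by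
        gcongr
        linarith
    _ = _ := by field_simp

lemma corrLengthSq_nonneg (lam : ι → Matrix κ κ ℂ) (ρ : Matrix (J → κ) (J → κ) ℂ) :
    0 ≤ corrLengthSq lam ρ :=
  Finset.sum_nonneg fun _ _ => sq_nonneg _

lemma corrLengthSq_kronecker_submatrix (p : J → Prop) [DecidablePred p] [Fintype {j // p j}]
    [Fintype {j // ¬p j}] (lam : ι → Matrix κ κ ℂ)
    (ρA : Matrix ({j // p j} → κ) ({j // p j} → κ) ℂ)
    (ρB : Matrix ({j // ¬p j} → κ) ({j // ¬p j} → κ) ℂ) :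
    corrLengthSq lam ((ρA ⊗ₖ ρB).submatrix (Equiv.piEquivPiSubtypeProd p _)
        (Equiv.piEquivPiSubtypeProd p _)) =
      corrLengthSq lam ρA * corrLengthSq lam ρB := by
  have htrace (a : J → ι) :
      ((ρA ⊗ₖ ρB).submatrix (Equiv.piEquivPiSubtypeProd p _) (Equiv.piEquivPiSubtypeProd p _) *
          piKron fun j => lam (a j)).trace =
        (ρA * piKron fun j : {j // p j} => lam (a j)).trace *
          (ρB * piKron fun j : {j // ¬p j} => lam (a j)).trace := by
    rw [piKron_eq_kronecker_submatrix p, submatrix_mul_equiv, trace_submatrix_equiv,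
      ← mul_kronecker_mul, trace_kronecker]
  simp only [corrLengthSq, htrace, norm_mul, mul_pow, Finset.sum_mul_sum, ← Fintype.sum_prod_type']
  exact Fintype.sum_equiv (Equiv.piEquivPiSubtypeProd p fun _ => ι) _ _ fun _ => rfl

end Correlations

lemma pow_add_pow_le_pow_add_pow {x : ℝ} (hx : 1 ≤ x) {a b c e : ℕ} (hac : a ≤ c) (hce : c ≤ e)
    (h : a + b = c + e) : x ^ c + x ^ e ≤ x ^ a + x ^ b := by
  have hb : x ^ b = x ^ e * x ^ (c - a) := by rw [← pow_add]; congr 1; omega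
  have hc : x ^ c = x ^ a * x ^ (c - a) := by rw [← pow_add]; congr 1; omega
  have hae : x ^ a ≤ x ^ e := pow_le_pow_right₀ hx (hac.trans hce)
  have hca : 1 ≤ x ^ (c - a) := one_le_pow₀ hx
  rw [hb, hc]
  nlinarith [mul_le_mul_of_nonneg_right hae (sub_nonneg.2 hca)]

lemma pow_sub_one_mul_pow_sub_one_le {x : ℝ} (hx : 1 ≤ x) {a b n : ℕ} (h : a + b = n) :
    (x ^ a - 1) * (x ^ b - 1) ≤ (x ^ (n / 2) - 1) * (x ^ (n - n / 2) - 1) := by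
  wlog hab : a ≤ b generalizing a b
  · rw [mul_comm]
    exact this (by omega) (by omega)
  have hsum := pow_add_pow_le_pow_add_pow hx (a := a) (b := b) (c := n / 2) (e := n - n / 2)
    (by omega) (by omega) (by omega)
  have hprod : x ^ a * x ^ b = x ^ (n / 2) * x ^ (n - n / 2) := by
    rw [← pow_add, ← pow_add]; congr 1; omega
  linear_combination hsum + hprod

lemma kyFan_le_sqrt_mul_sum_sq {α β : Type*} [Fintype α] [Fintype β] [DecidableEq β] (k : ℕ)
    (M : Matrix α β ℝ) : kyFan k M ≤ Real.sqrt (k * ∑ c, ∑ r, M r c ^ 2) := by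
  have hM := isHermitian_conjTranspose_mul_self M
  have hev : ∀ i, 0 ≤ hM.eigenvalues i := (posSemidef_conjTranspose_mul_self M).eigenvalues_nonneg
  have htrace : ∑ i, hM.eigenvalues i = ∑ c, ∑ r, M r c ^ 2 := by
    have := hM.trace_eq_sum_eigenvalues
    simp only [RCLike.ofReal_real_eq_id, id] at this
    rw [← this]
    simp [trace, mul_apply, sq]
  refine Finset.sup'_le _ _ fun s hs => Real.le_sqrt_of_sq_le ?_
  calc (∑ i ∈ s, singVals M i) ^ 2 ≤ s.card * ∑ i ∈ s, singVals M i ^ 2 :=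
        sq_sum_le_card_mul_sum_sq
    _ = s.card * ∑ i ∈ s, hM.eigenvalues i := by
        simp only [singVals, Real.sq_sqrt (hev _)]
    _ ≤ k * ∑ i, hM.eigenvalues i := by
        gcongr
        · exact Finset.sum_nonneg fun i _ => hev i
        · exact (Finset.mem_filter.1 hs).2
        · exact fun i _ _ => hev i
        · exact Finset.subset_univ s
    _ = k * ∑ c, ∑ r, M r c ^ 2 := by rw [htrace]

lemma sum_sum_snoc_comp_symm {m : ℕ} {X M : Type*} [Fintype X] [AddCommMonoid M]
    (σ : Equiv.Perm (Fin (m + 1))) (F : (Fin (m + 1) → X) → M) :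
    ∑ c : X, ∑ r : Fin m → X, F (fun j => (Fin.snoc r c : Fin (m + 1) → X) (σ.symm j)) =
      ∑ a, F a := by
  rw [← Fintype.sum_prod_type']
  exact ((Fin.snocEquiv fun _ => X).trans (σ.arrowCongr (.refl X))).sum_comp F

lemma corrLengthSq_le_of_sepUnder {n d : ℕ} (hd : 1 ≤ d) {ι : Type*} [Fintype ι] [DecidableEq ι]
    {lam : ι → Matrix (Fin d) (Fin d) ℂ} (hherm : ∀ i, (lam i).IsHermitian)
    (htr : ∀ i, (lam i).trace = 0)
    (horth : ∀ i i', (lam i * lam i').trace = if i = i' then 2 else 0)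
    {ρ : Matrix (Fin n → Fin d) (Fin n → Fin d) ℂ} {A : Finset (Fin n)} (hAne : A.Nonempty)
    (hA : A ≠ Finset.univ) (hsep : SepUnder ρ A) :
    corrLengthSq lam ρ ≤
      2 ^ n * ((d : ℝ) ^ (n / 2) - 1) * ((d : ℝ) ^ (n - n / 2) - 1) / (d : ℝ) ^ n := by
  obtain ⟨ρA, ρB, hρA, htrA, hρB, htrB, hfact⟩ := hsep
  have hρ : ρ = (ρA ⊗ₖ ρB).submatrix (Equiv.piEquivPiSubtypeProd (· ∈ A) _)
      (Equiv.piEquivPiSubtypeProd (· ∈ A) _) := by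
    ext v w
    exact hfact v w
  have : Nonempty {j // j ∈ A} := hAne.coe_sort
  have : Nonempty {j // j ∉ A} := nonempty_subtype.2 (by simpa [Finset.eq_univ_iff_forall] using hA)
  set a := Fintype.card {j // j ∈ A}
  set b := Fintype.card {j // j ∉ A}
  have hab : a + b = n := by
    have := Fintype.card_subtype_le (· ∈ A)
    simp only [b, Fintype.card_subtype_compl, Fintype.card_fin] at this ⊢
    omega
  have hbA := corrLengthSq_le hherm htr horth hρA htrA
  have hbB := corrLengthSq_le hherm htr horth hρB htrB
  simp only [Fintype.card_fin] at hbA hbB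
  have hd' : (1 : ℝ) ≤ d := by exact_mod_cast hd
  rw [hρ, corrLengthSq_kronecker_submatrix]
  calc corrLengthSq lam ρA * corrLengthSq lam ρB
      ≤ (2 ^ a * ((d : ℝ) ^ a - 1) / (d : ℝ) ^ a) * (2 ^ b * ((d : ℝ) ^ b - 1) / (d : ℝ) ^ b) :=
        mul_le_mul hbA hbB (corrLengthSq_nonneg _ _)
          (div_nonneg (mul_nonneg (by positivity) (sub_nonneg.2 (one_le_pow₀ hd'))) (by positivity))
    _ = 2 ^ n * (((d : ℝ) ^ a - 1) * ((d : ℝ) ^ b - 1)) / (d : ℝ) ^ n := by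
        rw [← hab, pow_add, pow_add]
        field_simp
    _ ≤ 2 ^ n * (((d : ℝ) ^ (n / 2) - 1) * ((d : ℝ) ^ (n - n / 2) - 1)) / (d : ℝ) ^ n := by
        gcongr 2 ^ n * ?_ / _
        exact pow_sub_one_mul_pow_sub_one_le hd' hab
    _ = _ := by ring

lemma sum_corrFull_sq_le_corrLengthSq {n d : ℕ} (lam : Fin (d ^ 2 - 1) → Matrix (Fin d) (Fin d) ℂ)
    (ρ : Matrix (Fin n → Fin d) (Fin n → Fin d) ℂ) :
    ∑ a, corrFull lam ρ a ^ 2 ≤ corrLengthSq lam ρ :=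
  Finset.sum_le_sum fun a _ => by
    rw [corrFull, ← sq_abs]
    gcongr
    exact Complex.abs_re_le_norm _

theorem kyFan_rest_vs_one_of_entangled_general (d : ℕ) (hd : 2 ≤ d)
    (lam : Fin (d ^ 2 - 1) → Matrix (Fin d) (Fin d) ℂ)
    (hherm : ∀ i, (lam i).IsHermitian)
    (htr : ∀ i, (lam i).trace = 0)
    (horth : ∀ i j, (lam i * lam j).trace = if i = j then 2 else 0)
    (m : ℕ) (σ : Equiv.Perm (Fin (m + 3)))
    (ρ : Matrix (Fin (m + 3) → Fin d) (Fin (m + 3) → Fin d) ℂ)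
    (hsome : ∃ A : Finset (Fin (m + 3)), A.Nonempty ∧ A ≠ Finset.univ ∧ SepUnder ρ A)
    (k : ℕ) :
    (Odd (m + 3) →
      kyFan k (Matrix.of fun (r : Fin (m + 2) → Fin (d ^ 2 - 1)) (c : Fin (d ^ 2 - 1)) =>
          corrFull lam ρ (fun j => (Fin.snoc r c : Fin (m + 3) → Fin (d ^ 2 - 1)) (σ.symm j)))
        ≤ Real.sqrt (2 ^ (m + 3) * k * ((d : ℝ) ^ ((m + 3) / 2) - 1) *
            ((d : ℝ) ^ ((m + 3) - (m + 3) / 2) - 1) / (d : ℝ) ^ (m + 3)))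
    ∧ (Even (m + 3) →
      kyFan k (Matrix.of fun (r : Fin (m + 2) → Fin (d ^ 2 - 1)) (c : Fin (d ^ 2 - 1)) =>
          corrFull lam ρ (fun j => (Fin.snoc r c : Fin (m + 3) → Fin (d ^ 2 - 1)) (σ.symm j)))
        ≤ Real.sqrt (2 ^ (m + 3) * k * ((d : ℝ) ^ ((m + 3) / 2) - 1) ^ 2
            / (d : ℝ) ^ (m + 3))) := by
  obtain ⟨A, hAne, hA, hsep⟩ := hsome
  have hfrob := (sum_corrFull_sq_le_corrLengthSq lam ρ).trans
    (corrLengthSq_le_of_sepUnder (by omega) hherm htr horth hAne hA hsep)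
  rw [← sum_sum_snoc_comp_symm σ] at hfrob
  have hkyFan := (kyFan_le_sqrt_mul_sum_sq k (of fun r c =>
      corrFull lam ρ fun j => (Fin.snoc r c : Fin (m + 3) → Fin (d ^ 2 - 1)) (σ.symm j))).trans
    (Real.sqrt_le_sqrt (mul_le_mul_of_nonneg_left hfrob k.cast_nonneg))
  refine ⟨fun _ => hkyFan.trans_eq ?_, fun heven => hkyFan.trans_eq ?_⟩
  · congr 1
    ring
  · obtain ⟨t, ht⟩ := heven
    rw [show m + 3 - (m + 3) / 2 = (m + 3) / 2 by omega]
    congr 1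
    ring

/-- (Theorem 4(ii)) For a pure `n`-partite state (`n = m + 3 ≥ 3`) that is separable under
some bipartition but entangled under the bipartition `j₁⋯j_{n-1} | j_n` (the permutation
`j₁,…,j_n` of the factors being given by `σ`), the Ky Fan norms of `T_{j₁⋯j_{n-1}|j_n}`
satisfy the stated odd/even bounds. -/
theorem kyFan_rest_vs_one_of_entangled (d : ℕ) (hd : 2 ≤ d)
    (lam : Fin (d ^ 2 - 1) → Matrix (Fin d) (Fin d) ℂ)
    (hherm : ∀ i, (lam i).IsHermitian)
    (htr : ∀ i, (lam i).trace = 0)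
    (horth : ∀ i j, (lam i * lam j).trace = if i = j then 2 else 0)
    (m : ℕ) (σ : Equiv.Perm (Fin (m + 3)))
    (ρ : Matrix (Fin (m + 3) → Fin d) (Fin (m + 3) → Fin d) ℂ)
    (hpsd : ρ.PosSemidef) (htrρ : ρ.trace = 1) (hpure : ρ * ρ = ρ)
    (hsome : ∃ A : Finset (Fin (m + 3)), A.Nonempty ∧ A ≠ Finset.univ ∧ SepUnder ρ A)
    (hent : ¬ SepUnder ρ ({σ (Fin.last (m + 2))}ᶜ))
    (k : ℕ) (hk1 : 1 ≤ k) (hk2 : k ≤ d ^ 2 - 1) :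
    (Odd (m + 3) →
      kyFan k (Matrix.of fun (r : Fin (m + 2) → Fin (d ^ 2 - 1)) (c : Fin (d ^ 2 - 1)) =>
          corrFull lam ρ (fun j => (Fin.snoc r c : Fin (m + 3) → Fin (d ^ 2 - 1)) (σ.symm j)))
        ≤ Real.sqrt (2 ^ (m + 3) * k * ((d : ℝ) ^ ((m + 3) / 2) - 1) *
            ((d : ℝ) ^ ((m + 3) - (m + 3) / 2) - 1) / (d : ℝ) ^ (m + 3)))
    ∧ (Even (m + 3) →
      kyFan k (Matrix.of fun (r : Fin (m + 2) → Fin (d ^ 2 - 1)) (c : Fin (d ^ 2 - 1)) =>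
          corrFull lam ρ (fun j => (Fin.snoc r c : Fin (m + 3) → Fin (d ^ 2 - 1)) (σ.symm j)))
        ≤ Real.sqrt (2 ^ (m + 3) * k * ((d : ℝ) ^ ((m + 3) / 2) - 1) ^ 2
            / (d : ℝ) ^ (m + 3))) :=
  kyFan_rest_vs_one_of_entangled_general d hd lam hherm htr horth m σ ρ hsome k
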